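/- arXiv:1005.1038 — 3 statements merged into one kernel-verified Lean document; each statement's English description precedes it below -/
import Mathlib

section
/- Let m and n be positive integers with m ∣ n, n > 2, and (m,n) ≠ (1,4). Then no element g of Γ̃_m(n) satisfies (g + 1)² = 0; consequently every parabolic element of Γ̃_m(n) is unipotent. -/
/-- Membership in the subgroup `Γ̃_m(n)` of `SL(2,ℤ)`: all matrices `[[a,b],[c,d]]` with
`a ≡ 1 (mod n)`, `c ≡ 0 (mod n)`, `d ≡ 1 (mod n)`, and `b ≡ 0 (mod m)`. -/
def GammaTilde (m n : ℕ) (g : Matrix.SpecialLinearGroup (Fin 2) ℤ) : Prop :=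
  (n : ℤ) ∣ ((g : Matrix (Fin 2) (Fin 2) ℤ) 0 0 - 1) ∧
    (m : ℤ) ∣ (g : Matrix (Fin 2) (Fin 2) ℤ) 0 1 ∧
    (n : ℤ) ∣ (g : Matrix (Fin 2) (Fin 2) ℤ) 1 0 ∧
    (n : ℤ) ∣ ((g : Matrix (Fin 2) (Fin 2) ℤ) 1 1 - 1)

/-- Let `m ∣ n` be positive integers with `n > 2` and `(m, n) ≠ (1, 4)`.
Then no element `g` of `Γ̃_m(n)` satisfies `(g + 1)² = 0`; consequently every parabolic
element of `Γ̃_m(n)` is unipotent. -/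
theorem GammaTilde_parabolic_unipotent (m n : ℕ) (hm : 0 < m) (hn : 2 < n) (hmn : m ∣ n)
    (h : ¬(m = 1 ∧ n = 4)) (g : Matrix.SpecialLinearGroup (Fin 2) ℤ)
    (hg : GammaTilde m n g) :
    ((g : Matrix (Fin 2) (Fin 2) ℤ) + 1) ^ 2 ≠ 0 ∧
      ((((g : Matrix (Fin 2) (Fin 2) ℤ) - 1) ^ 2 = 0 ∨
          ((g : Matrix (Fin 2) (Fin 2) ℤ) + 1) ^ 2 = 0) →
        ((g : Matrix (Fin 2) (Fin 2) ℤ) - 1) ^ 2 = 0) := by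
  obtain ⟨ha, hb, hc, hd⟩ := hg
  have hdet : (g : Matrix (Fin 2) (Fin 2) ℤ) 0 0 * (g : Matrix (Fin 2) (Fin 2) ℤ) 1 1
      - (g : Matrix (Fin 2) (Fin 2) ℤ) 0 1 * (g : Matrix (Fin 2) (Fin 2) ℤ) 1 0 = 1 := by
    have := g.property
    rwa [Matrix.det_fin_two] at this
  have key : ((g : Matrix (Fin 2) (Fin 2) ℤ) + 1) ^ 2 ≠ 0 := by
    intro hp
    have h00 := congrFun (congrFun hp 0) 0
    have h01 := congrFun (congrFun hp 0) 1
    have h10 := congrFun (congrFun hp 1) 0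
    have h11 := congrFun (congrFun hp 1) 1
    simp [pow_two, Matrix.mul_apply, Fin.sum_univ_two, Matrix.one_apply] at h00 h01 h10 h11
    set a := (g : Matrix (Fin 2) (Fin 2) ℤ) 0 0 with h₁
    set b := (g : Matrix (Fin 2) (Fin 2) ℤ) 0 1 with h₂
    set c := (g : Matrix (Fin 2) (Fin 2) ℤ) 1 0 with h₃
    set d := (g : Matrix (Fin 2) (Fin 2) ℤ) 1 1 with h₄
    -- trace is -2
    have htr : a + d = -2 := by
      by_contra htr
      have hb0 : b = 0 := by
        have : b * (a + d + 2) = 0 := by linarith [h01, mul_comm b (a+1)]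
        rcases mul_eq_zero.mp this with h' | h'
        · exact h'
        · exact absurd (by linarith) htr
      have hc0 : c = 0 := by
        have : c * (a + d + 2) = 0 := by nlinarith [h10]
        rcases mul_eq_zero.mp this with h' | h'
        · exact h'
        · exact absurd (by linarith) htr
      have e1 : (a + 1) * (a + 1) = 0 := by rw [hb0] at h00; linarith
      have ha1 : a = -1 := by nlinarith
      have e2 : (d + 1) * (d + 1) = 0 := by rw [hb0] at h11; linarith
      have hd1 : d = -1 := by nlinarith
      exact htr (by rw [ha1, hd1]; ring)
    -- n divides 4, hence n = 4
    have hn4 : (n : ℤ) ∣ 4 := by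
      have h' : (n : ℤ) ∣ (a - 1) + (d - 1) := dvd_add ha hd
      have h4 : (a - 1) + (d - 1) = -4 := by linarith
      rw [h4] at h'
      exact dvd_neg.mp h'
    have hn4' : n = 4 := by
      have hdvd : n ∣ 4 := by exact_mod_cast hn4
      have hle : n ≤ 4 := Nat.le_of_dvd (by norm_num) hdvd
      interval_cases n <;> omega
    subst hn4'
    have hm2 : (2 : ℤ) ∣ (m : ℤ) := by
      have hle : m ≤ 4 := Nat.le_of_dvd (by norm_num) hmn
      have : m = 2 ∨ m = 4 := by interval_cases m <;> omega
      rcases this with rfl | rfl <;> norm_num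
    obtain ⟨b', hb'⟩ : (2 : ℤ) ∣ b := dvd_trans hm2 hb
    obtain ⟨c', hc'⟩ : (4 : ℤ) ∣ c := by exact_mod_cast hc
    obtain ⟨s, hs⟩ : (4 : ℤ) ∣ a - 1 := by exact_mod_cast ha
    have hA00 : a = 1 + 4 * s := by linarith
    have hA11 : d = -3 - 4 * s := by linarith
    rw [hA00, hA11, hb', hc'] at hdet
    have : (1 + 4*s) * (-3 - 4*s) - 2*b' * (4*c') = 1 := hdet
    have h8 : 4 = -16*s - 16*(s*s) - 8*(b'*c') := by nlinarith [this]
    omega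
  exact ⟨key, fun hpar => hpar.resolve_right key⟩
end

section
/- Let G = ℤ/2 * ℤ/2 * ℤ/2 be the free product of three copies of the cyclic group of order 2, with t₁, t₂, t₃ the generators of the three factors, and let ε : G → ℤ/2 be the homomorphism sending each tᵢ to the nontrivial element. Then the kernel of ε is a free group of rank 2, freely generated by the elements t₂t₁ and t₁t₃. -/
/-- The free product `ℤ/2 * ℤ/2 * ℤ/2` of three copies of the cyclic group of order two. -/
abbrev FP3Z2 := Monoid.CoprodI (fun _ : Fin 3 => Multiplicative (ZMod 2))

/-- The generator `tᵢ` of the `i`-th factor of `ℤ/2 * ℤ/2 * ℤ/2`. -/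
def tGen (i : Fin 3) : FP3Z2 :=
  Monoid.CoprodI.of (i := i) (Multiplicative.ofAdd (1 : ZMod 2))

/-- The homomorphism `ε : ℤ/2 * ℤ/2 * ℤ/2 → ℤ/2` sending each `tᵢ` to the nontrivial
element. -/
def epsilonFP : FP3Z2 →* Multiplicative (ZMod 2) :=
  Monoid.CoprodI.lift fun _ => MonoidHom.id (Multiplicative (ZMod 2))

/-- The two elements `t₂t₁` and `t₁t₃` (here zero-indexed: `t 1 * t 0` and `t 0 * t 2`). -/
def kerBasisFP : Fin 2 → FP3Z2 :=
  ![tGen 1 * tGen 0, tGen 0 * tGen 2]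

/-!
`ℤ/2 * ℤ/2 * ℤ/2` embeds in `F(a, b) ⋊ ℤ/2`, where the generator `s` of `ℤ/2` inverts `a` and `b`:
send `t₁, t₂, t₃` to the involutions `s, a s, b⁻¹ s`; a left inverse sends `a ↦ t₂t₁`, `b ↦ t₁t₃`,
`s ↦ t₁`. This embedding maps `t₂t₁, t₁t₃` to `a, b` and turns `ε` into the projection onto `ℤ/2`,
whose kernel is the free factor `F(a, b)`.
-/

open Multiplicative SemidirectProduct

theorem MonoidHom.injective_and_range_eq_ker_of_comp_eq {N G K Q : Type*} [Group N] [Group G]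
    [Group K] [Group Q] {f : N →* G} {ψ : G →* K} {j : N →* K} {ρ : K →* Q}
    (hψ : Function.Injective ψ) (hf : ψ.comp f = j) (hj : Function.Injective j)
    (hjρ : j.range = ρ.ker) : Function.Injective f ∧ f.range = (ρ.comp ψ).ker := by
  refine ⟨Function.Injective.of_comp (f := ψ) ?_, ?_⟩
  · rwa [← coe_comp, hf]
  rw [← comap_ker, ← hjρ, ← hf, range_comp, Subgroup.comap_map_eq_self_of_injective hψ]

namespace ZMod

@[simp] lemma ofAdd_one_mul_ofAdd_one : ofAdd (1 : ZMod 2) * ofAdd 1 = 1 := by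
  decide

lemma eq_one_or_eq_ofAdd_one (g : Multiplicative (ZMod 2)) : g = 1 ∨ g = ofAdd 1 := by
  revert g; decide

def liftTwo {M : Type*} [Group M] (x : M) (hx : x * x = 1) : Multiplicative (ZMod 2) →* M :=
  AddMonoidHom.toMultiplicativeLeft <| ZMod.lift 2
    ⟨zmultiplesHom (Additive M) (Additive.ofMul x), by
      simpa [two_zsmul] using congrArg Additive.ofMul hx⟩

@[simp] lemma liftTwo_ofAdd_one {M : Type*} [Group M] (x : M) (hx : x * x = 1) :
    liftTwo x hx (ofAdd 1) = x := by
  change Additive.toMul (ZMod.lift 2 _ ((1 : ℤ) : ZMod 2)) = x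
  rw [ZMod.lift_coe]
  simp

lemma monoidHom_ext_two {M : Type*} [Monoid M] {f g : Multiplicative (ZMod 2) →* M}
    (h : f (ofAdd 1) = g (ofAdd 1)) : f = g := by
  refine MonoidHom.ext fun x => ?_
  rcases eq_one_or_eq_ofAdd_one x with rfl | rfl <;> simp [h]

end ZMod

namespace FreeGroup

variable {α : Type*}

def invGensHom : FreeGroup α →* FreeGroup α :=
  lift fun a => (of a)⁻¹

lemma invGensHom_comp_self :
    (invGensHom : FreeGroup α →* FreeGroup α).comp invGensHom = .id _ := by
  ext a
  simp [invGensHom]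

def invGens : MulAut (FreeGroup α) :=
  invGensHom.toMulEquiv invGensHom invGensHom_comp_self invGensHom_comp_self

@[simp] lemma invGens_of (a : α) : invGens (of a) = (of a)⁻¹ := by
  simp [invGens, invGensHom]

lemma invGens_mul_self : (invGens : MulAut (FreeGroup α)) * invGens = 1 :=
  MulEquiv.ext fun w => DFunLike.congr_fun invGensHom_comp_self w

def invGensAction : Multiplicative (ZMod 2) →* MulAut (FreeGroup α) :=
  ZMod.liftTwo invGens invGens_mul_self

@[simp] lemma invGensAction_ofAdd_one :
    invGensAction (ofAdd 1) = (invGens : MulAut (FreeGroup α)) :=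
  ZMod.liftTwo_ofAdd_one _ _

end FreeGroup

abbrev InvGensSemidirect (α : Type*) :=
  FreeGroup α ⋊[FreeGroup.invGensAction] Multiplicative (ZMod 2)

lemma InvGensSemidirect.mk_mul_self {α : Type*} {w : FreeGroup α}
    (hw : FreeGroup.invGens w = w⁻¹) :
    (⟨w, ofAdd 1⟩ : InvGensSemidirect α) * ⟨w, ofAdd 1⟩ = 1 := by
  refine SemidirectProduct.ext ?_ ?_
  · simp [hw]
  · exact ZMod.ofAdd_one_mul_ofAdd_one

namespace FP3Z2

lemma tGen_mul_self (i : Fin 3) : tGen i * tGen i = 1 := by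
  rw [tGen, ← map_mul, ZMod.ofAdd_one_mul_ofAdd_one, map_one]

@[simp] lemma tGen_mul_tGen_mul (i : Fin 3) (g : FP3Z2) : tGen i * (tGen i * g) = g := by
  rw [← mul_assoc, tGen_mul_self, one_mul]

lemma tGen_inv (i : Fin 3) : (tGen i)⁻¹ = tGen i :=
  inv_eq_of_mul_eq_one_right (tGen_mul_self i)

@[simp] lemma epsilonFP_tGen (i : Fin 3) : epsilonFP (tGen i) = ofAdd 1 := by
  simp [epsilonFP, tGen]

/-- Chosen so that `t₂t₁ ↦ of 0` and `t₁t₃ ↦ of 1`. -/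
def reflectionWord : Fin 3 → FreeGroup (Fin 2) :=
  ![1, .of 0, (.of 1)⁻¹]

lemma invGens_reflectionWord (i : Fin 3) :
    FreeGroup.invGens (reflectionWord i) = (reflectionWord i)⁻¹ := by
  fin_cases i <;> simp [reflectionWord]

def toSemidirect : FP3Z2 →* InvGensSemidirect (Fin 2) :=
  Monoid.CoprodI.lift fun i =>
    ZMod.liftTwo ⟨reflectionWord i, ofAdd 1⟩
      (InvGensSemidirect.mk_mul_self (invGens_reflectionWord i))

@[simp] lemma toSemidirect_tGen (i : Fin 3) :
    toSemidirect (tGen i) = ⟨reflectionWord i, ofAdd 1⟩ := by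
  simp [toSemidirect, tGen]

lemma toSemidirect_comp_lift_kerBasisFP :
    toSemidirect.comp (FreeGroup.lift kerBasisFP) = inl := by
  refine FreeGroup.ext_hom _ _ fun i => ?_
  fin_cases i <;> refine SemidirectProduct.ext ?_ ?_ <;> simp [kerBasisFP, reflectionWord]

lemma rightHom_comp_toSemidirect : rightHom.comp toSemidirect = epsilonFP := by
  ext i : 1
  refine ZMod.monoidHom_ext_two ?_
  change (toSemidirect (tGen i)).right = epsilonFP (tGen i)
  simp

lemma lift_kerBasisFP_comp_invGens :
    (FreeGroup.lift kerBasisFP).comp FreeGroup.invGens.toMonoidHom =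
      (MulAut.conj (tGen 0)).toMonoidHom.comp (FreeGroup.lift kerBasisFP) := by
  refine FreeGroup.ext_hom _ _ fun i => ?_
  fin_cases i <;> simp [kerBasisFP, tGen_inv, mul_assoc, tGen_mul_self]

def ofSemidirect : InvGensSemidirect (Fin 2) →* FP3Z2 :=
  SemidirectProduct.lift (FreeGroup.lift kerBasisFP) (ZMod.liftTwo (tGen 0) (tGen_mul_self 0))
    fun g => by
      rcases ZMod.eq_one_or_eq_ofAdd_one g with rfl | rfl
      · ext w : 1
        simp
      · simpa using lift_kerBasisFP_comp_invGens

lemma ofSemidirect_comp_toSemidirect : ofSemidirect.comp toSemidirect = .id _ := by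
  ext i : 1
  refine ZMod.monoidHom_ext_two ?_
  change ofSemidirect (toSemidirect (tGen i)) = tGen i
  rw [toSemidirect_tGen, ← inl_left_mul_inr_right ⟨_, _⟩]
  fin_cases i <;>
    simp [ofSemidirect, reflectionWord, kerBasisFP, tGen_inv, mul_assoc, tGen_mul_self]

lemma toSemidirect_injective : Function.Injective toSemidirect :=
  Function.LeftInverse.injective (g := ofSemidirect)
    (DFunLike.congr_fun ofSemidirect_comp_toSemidirect)

end FP3Z2

/-- The kernel of `ε : ℤ/2 * ℤ/2 * ℤ/2 → ℤ/2` is a free group of rank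
`2`, freely generated by `t₂t₁` and `t₁t₃`: the induced homomorphism from the free group of
rank `2` is injective with range exactly `ker ε`. -/
theorem ker_epsilon_free_of_rank_two :
    Function.Injective ⇑(FreeGroup.lift kerBasisFP) ∧
      (FreeGroup.lift kerBasisFP : FreeGroup (Fin 2) →* FP3Z2).range = epsilonFP.ker := by
  rw [← FP3Z2.rightHom_comp_toSemidirect]
  exact MonoidHom.injective_and_range_eq_ker_of_comp_eq FP3Z2.toSemidirect_injective
    FP3Z2.toSemidirect_comp_lift_kerBasisFP inl_injective range_inl_eq_ker_rightHom
end

section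
/- Let p be an odd prime, let m be a positive power of p, and let A be a nontrivial finite abelian p-group. Suppose the cyclic group C of order 2m acts on A (by automorphisms) in such a way that the unique element of order 2 of C acts by inversion a ↦ a⁻¹. Then the semidirect product A ⋊ C admits a surjective group homomorphism onto the dihedral group of order 2p. -/
/-!
Write `σ := φ 2`. Since `σ` has `p`-power order, orbit counting gives a nontrivial fixed point
of `σ` in `A`, so `a ↦ σ a / a` is not surjective and the coinvariants `A / (σ - 1) A` form a
nontrivial abelian `p`-group; it maps onto its Frattini quotient, a nonzero `ℤ/p`-vector space,
and hence onto `ℤ/p`. This gives a `σ`-invariant surjection `π : A → ℤ/p`. As `m` is odd, the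
generator `1 = 2 · (m + 1) / 2 + m` of `ℤ/2m` acts as a power of `σ` followed by inversion, so
`π ∘ φ g = π ^ (-1) ^ g`. Thus `π` on `A` and the parity on `ℤ/2m` assemble into a map
`A ⋊ ℤ/2m → ℤ/p ⋊ ℤ/2 = D_p`, surjective because `π` is.
-/

open Multiplicative

theorem exists_surjective_zmod_of_forall_pow_eq_one {p : ℕ} [Fact p.Prime] {Q : Type*}
    [CommGroup Q] [Nontrivial Q] (hQ : ∀ x : Q, x ^ p = 1) :
    ∃ π : Q →* Multiplicative (ZMod p), Function.Surjective π := by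
  let _ : Module (ZMod p) (Additive Q) :=
    AddCommGroup.zmodModule (n := p) fun x => congrArg Additive.ofMul (hQ x.toMul)
  obtain ⟨v, hv⟩ := exists_ne (1 : Q)
  obtain ⟨f, hf⟩ := Module.Projective.exists_dual_ne_zero (ZMod p)
    (show Additive.ofMul v ≠ 0 from hv)
  refine ⟨AddMonoidHom.toMultiplicativeRight f.toAddMonoidHom, fun y => ?_⟩
  obtain ⟨x, hx⟩ := LinearMap.surjective (f := f) (by rintro rfl; exact hf rfl) y.toAdd
  exact ⟨x.toMul, congrArg ofAdd hx⟩

theorem MonoidHom.range_ne_top_of_apply_eq_one {G : Type*} [Group G] [Finite G] {f : G →* G}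
    {x : G} (hx : x ≠ 1) (hfx : f x = 1) : f.range ≠ ⊤ := by
  rw [Ne, MonoidHom.range_eq_top, ← Finite.injective_iff_surjective]
  exact fun hf => hx (hf (hfx.trans f.map_one.symm))

namespace IsPGroup

variable {p : ℕ} [Fact p.Prime] {A : Type*} [CommGroup A] [Finite A] [Nontrivial A]

theorem exists_surjective_zmod (hA : IsPGroup p A) :
    ∃ π : A →* Multiplicative (ZMod p), Function.Surjective π := by
  obtain ⟨n, hn, hcard⟩ := hA.nontrivial_iff_card.mp ‹_›
  obtain ⟨x, hx⟩ := exists_prime_orderOf_dvd_card' p (hcard ▸ dvd_pow_self p hn.ne')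
  have hx1 : x ≠ 1 := by
    rintro rfl
    exact (Fact.out : p.Prime).one_lt.ne' (hx ▸ orderOf_one)
  have hrange := (powMonoidHom p : A →* A).range_ne_top_of_apply_eq_one hx1
    (hx ▸ pow_orderOf_eq_one x)
  have := QuotientGroup.nontrivial_iff.mpr hrange
  obtain ⟨π, hπ⟩ := exists_surjective_zmod_of_forall_pow_eq_one (p := p)
    (Q := A ⧸ (powMonoidHom p : A →* A).range) fun y => by
      induction y using QuotientGroup.induction_on with
      | H a => exact (QuotientGroup.eq_one_iff _).mpr ⟨a, rfl⟩
  exact ⟨π.comp (QuotientGroup.mk' _), hπ.comp (QuotientGroup.mk'_surjective _)⟩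

theorem exists_surjective_zmod_invariant (hA : IsPGroup p A) (σ : MulAut A) {t : ℕ}
    (hσ : σ ^ p ^ t = 1) :
    ∃ π : A →* Multiplicative (ZMod p), Function.Surjective π ∧ ∀ a, π (σ a) = π a := by
  have hP : IsPGroup p (Subgroup.zpowers σ) := fun ⟨_, k, rfl⟩ =>
    ⟨t, Subtype.ext <| show (σ ^ k) ^ p ^ t = 1 by
      rw [← zpow_natCast, ← zpow_mul, mul_comm, zpow_mul, zpow_natCast, hσ, one_zpow]⟩
  obtain ⟨n, hn, hcard⟩ := hA.nontrivial_iff_card.mp ‹_›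
  obtain ⟨x, hx, hx1⟩ := hP.exists_fixed_point_of_prime_dvd_card_of_fixed_point A
    (hcard ▸ dvd_pow_self p hn.ne') (a := 1) fun g => smul_one g
  let ψ : A →* A := σ.toMonoidHom / MonoidHom.id A
  have hψx : ψ x = 1 := div_eq_one.mpr (hx ⟨σ, Subgroup.mem_zpowers σ⟩)
  have := QuotientGroup.nontrivial_iff.mpr (ψ.range_ne_top_of_apply_eq_one (Ne.symm hx1) hψx)
  obtain ⟨π, hπ⟩ := (hA.to_quotient ψ.range).exists_surjective_zmod
  refine ⟨π.comp (QuotientGroup.mk' _), hπ.comp (QuotientGroup.mk'_surjective _), fun a => ?_⟩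
  exact congrArg π (QuotientGroup.eq_iff_div_mem.mpr ⟨a, rfl⟩)

end IsPGroup

namespace DihedralGroup

def rHom (n : ℕ) : Multiplicative (ZMod n) →* DihedralGroup n where
  toFun x := r x.toAdd
  map_one' := rfl
  map_mul' x y := (r_mul_r x.toAdd y.toAdd).symm

def reflectionHom (n : ℕ) : ℤˣ →* DihedralGroup n where
  toFun u := if u = 1 then 1 else sr 0
  map_one' := if_pos rfl
  map_mul' u v := by
    rcases Int.units_eq_one_or u with rfl | rfl <;> rcases Int.units_eq_one_or v with rfl | rfl <;>
      simp

variable {n : ℕ}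

@[simp]
theorem rHom_apply (x : Multiplicative (ZMod n)) : rHom n x = r x.toAdd := rfl

theorem reflectionHom_neg_one : reflectionHom n (-1) = sr 0 := by
  simp [reflectionHom]

theorem reflectionHom_conj_rHom (u : ℤˣ) (x : Multiplicative (ZMod n)) :
    reflectionHom n u * rHom n x * (reflectionHom n u)⁻¹ = rHom n (x ^ (u : ℤ)) := by
  rcases Int.units_eq_one_or u with rfl | rfl
  · simp [reflectionHom]
  · simp [reflectionHom_neg_one, inv_sr, sr_mul_r, sr_mul_sr]

end DihedralGroup

open DihedralGroup in
theorem SemidirectProduct.exists_surjective_dihedralGroup {n : ℕ} {N G : Type*} [Group N]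
    [Group G] {φ : G →* MulAut N} (π : N →* Multiplicative (ZMod n)) (hπ : Function.Surjective π)
    (χ : G →* ℤˣ) {g₀ : G} (hg₀ : χ g₀ = -1) (hπφ : ∀ g a, π (φ g a) = π a ^ (χ g : ℤ)) :
    ∃ f : N ⋊[φ] G →* DihedralGroup n, Function.Surjective f := by
  let f := lift (φ := φ) ((rHom n).comp π) ((reflectionHom n).comp χ) fun g =>
    MonoidHom.ext fun a => show
      rHom n (π (φ g a)) = reflectionHom n (χ g) * rHom n (π a) * (reflectionHom n (χ g))⁻¹ by
      rw [reflectionHom_conj_rHom, hπφ]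
  refine ⟨f, ?_⟩
  rintro (i | i)
  · obtain ⟨a, ha⟩ := hπ (ofAdd i)
    exact ⟨inl a, by simp [f, ha]⟩
  · obtain ⟨a, ha⟩ := hπ (ofAdd (-i))
    refine ⟨inl a * inr g₀, ?_⟩
    simp [f, ha, hg₀, reflectionHom_neg_one, r_mul_sr]

def ZMod.negOnePowHom {n : ℕ} (h : 2 ∣ n) : Multiplicative (ZMod n) →* ℤˣ where
  toFun x := (-1 : ℤˣ) ^ ZMod.castHom h (ZMod 2) x.toAdd
  map_one' := by simp
  map_mul' x y := by simp only [toAdd_mul, map_add, uzpow_add]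

theorem ZMod.negOnePowHom_ofAdd_one {n : ℕ} (h : 2 ∣ n) : negOnePowHom h (ofAdd 1) = -1 := by
  simp only [negOnePowHom, MonoidHom.coe_mk, OneHom.coe_mk, toAdd_ofAdd, map_one, uzpow_one]

theorem map_apply_eq_zpow_negOnePowHom {A Q : Type*} [CommGroup A] [CommGroup Q] {m : ℕ}
    (hm : Odd m) (φ : Multiplicative (ZMod (2 * m)) →* MulAut A)
    (hφ : φ (ofAdd (m : ZMod (2 * m))) = MulEquiv.inv A) (π : A →* Q)
    (hπ : ∀ a, π (φ (ofAdd 2) a) = π a) (g : Multiplicative (ZMod (2 * m))) (a : A) :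
    π (φ g a) = π a ^ (ZMod.negOnePowHom (dvd_mul_right 2 m) g : ℤ) := by
  have : NeZero (2 * m) := ⟨by have := hm.pos; omega⟩
  have hσ (k : ℕ) (a : A) : π ((φ (ofAdd 2) ^ k) a) = π a := by
    induction k with
    | zero => rfl
    | succ k ih => rw [pow_succ', MulAut.mul_apply, hπ, ih]
  obtain ⟨j, rfl⟩ := hm
  have hgen : ofAdd (1 : ZMod (2 * (2 * j + 1)))
      = ofAdd 2 ^ (j + 1) * ofAdd (((2 * j + 1 : ℕ)) : ZMod (2 * (2 * j + 1))) := by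
    rw [← ofAdd_nsmul, ← ofAdd_add]
    congr 1
    have h0 := ZMod.natCast_self (2 * (2 * j + 1))
    push_cast at h0 ⊢
    linear_combination -h0
  have hinv (a : A) : π (φ (ofAdd 1) a) = (π a)⁻¹ := by
    rw [hgen, map_mul, MulAut.mul_apply, hφ, map_pow, hσ]
    exact map_inv π a
  obtain ⟨k, rfl⟩ : ∃ k : ℕ, g = ofAdd 1 ^ k :=
    ⟨g.toAdd.val, by rw [← ofAdd_nsmul, nsmul_one, ZMod.natCast_zmod_val]; rfl⟩
  induction k generalizing a with
  | zero => simp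
  | succ k ih =>
    rw [pow_succ, map_mul, MulAut.mul_apply, ih, hinv, map_mul, ZMod.negOnePowHom_ofAdd_one,
      Units.val_mul, Units.val_neg, Units.val_one, mul_neg_one, zpow_neg, inv_zpow]

/-- Let `p` be an odd prime, `m` a positive power of `p`, and `A` a
nontrivial finite abelian `p`-group. Suppose the cyclic group of order `2m` acts on `A`
(by automorphisms) so that its unique element of order `2` acts by inversion. Then the
semidirect product `A ⋊ ℤ/2m` surjects onto the dihedral group of order `2p`. -/
theorem semidirect_surjects_onto_dihedral (p m : ℕ) (hp : p.Prime) (hodd : Odd p)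
    (hm : ∃ t : ℕ, 1 ≤ t ∧ m = p ^ t)
    (A : Type*) [CommGroup A] [Finite A] [Nontrivial A] (hA : IsPGroup p A)
    (φ : Multiplicative (ZMod (2 * m)) →* MulAut A)
    (hφ : φ (Multiplicative.ofAdd (m : ZMod (2 * m))) = MulEquiv.inv A) :
    ∃ f : A ⋊[φ] Multiplicative (ZMod (2 * m)) →* DihedralGroup p,
      Function.Surjective f := by
  obtain ⟨t, -, rfl⟩ := hm
  have := Fact.mk hp
  have hσ : φ (ofAdd 2) ^ p ^ t = 1 := by
    have h0 : p ^ t • (2 : ZMod (2 * p ^ t)) = 0 := by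
      simpa [nsmul_eq_mul, mul_comm] using ZMod.natCast_self (2 * p ^ t)
    rw [← map_pow, ← ofAdd_nsmul, h0, ofAdd_zero, map_one]
  obtain ⟨π, hπ, hπσ⟩ := hA.exists_surjective_zmod_invariant (φ (ofAdd 2)) hσ
  exact SemidirectProduct.exists_surjective_dihedralGroup π hπ _
    (ZMod.negOnePowHom_ofAdd_one _) (map_apply_eq_zpow_negOnePowHom hodd.pow φ hφ π hπσ)
end
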